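/- For the dyad of Rössler systems coupled via the variable z with coupling strength ρ, let Φ : ℝ⁶ → ℝ⁶ be the observability map Φ = (y₁, L_F y₁, y₂, L_F y₂, L_F² y₂, L_F³ y₂), obtained by measuring y at both nodes with one derivative at node 1 and three derivatives at node 2. Then the observability determinant det DΦ(p) equals −ρ at every point p ∈ ℝ⁶. -/

import Mathlib

/-- The `k`-th Lie derivative of a scalar function `h` along a vector field `F`. -/
noncomputable def lieD {E : Type*} [NormedAddCommGroup E] [NormedSpace ℝ E]
    (F : E → E) (k : ℕ) (h : E → ℝ) : E → ℝ :=
  match k with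
  | 0 => h
  | k + 1 => fun p => fderiv ℝ (lieD F k h) p (F p)

/-- The observability determinant of a map `Φ` at a point `p`:
the determinant of the Jacobian (Fréchet derivative) of `Φ` at `p`. -/
noncomputable def obsDet {E : Type*} [NormedAddCommGroup E] [NormedSpace ℝ E]
    (Φ : E → E) (p : E) : ℝ :=
  LinearMap.det ((fderiv ℝ Φ p).toLinearMap)

/-- The Rössler vector field with parameters `a b c`, coordinates `(x, y, z)`. -/
def rossler (a b c : ℝ) (p : Fin 3 → ℝ) : Fin 3 → ℝ :=
  ![-p 1 - p 2, p 0 + a * p 1, b + p 2 * (p 0 - c)]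

/-- Dyad of Rössler systems coupled via the variable `z` with coupling strength `ρ`;
coordinates `(x₁, y₁, z₁, x₂, y₂, z₂)`. -/
def dyadZ (a b c ρ : ℝ) (p : Fin 6 → ℝ) : Fin 6 → ℝ :=
  ![-p 1 - p 2,
    p 0 + a * p 1,
    b + p 2 * (p 0 - c) + ρ * (p 5 - p 2),
    -p 4 - p 5,
    p 3 + a * p 4,
    b + p 5 * (p 3 - c) + ρ * (p 2 - p 5)]

/-- Observability map measuring `y` at both nodes, one derivative at node 1 and three
at node 2: `Φ = (y₁, L_F y₁, y₂, L_F y₂, L_F² y₂, L_F³ y₂)`. -/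
noncomputable def PhiY2Y4 (F : (Fin 6 → ℝ) → (Fin 6 → ℝ)) (q : Fin 6 → ℝ) : Fin 6 → ℝ :=
  ![lieD F 0 (fun r => r 1) q,
    lieD F 1 (fun r => r 1) q,
    lieD F 0 (fun r => r 4) q,
    lieD F 1 (fun r => r 4) q,
    lieD F 2 (fun r => r 4) q,
    lieD F 3 (fun r => r 4) q]

lemma dZ0 (a b c ρ : ℝ) (q : Fin 6 → ℝ) : dyadZ a b c ρ q 0 = -q 1 - q 2 := rfl
lemma dZ1 (a b c ρ : ℝ) (q : Fin 6 → ℝ) : dyadZ a b c ρ q 1 = q 0 + a * q 1 := rfl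
lemma dZ2 (a b c ρ : ℝ) (q : Fin 6 → ℝ) : dyadZ a b c ρ q 2 = b + q 2 * (q 0 - c) + ρ * (q 5 - q 2) := rfl
lemma dZ3 (a b c ρ : ℝ) (q : Fin 6 → ℝ) : dyadZ a b c ρ q 3 = -q 4 - q 5 := rfl
lemma dZ4 (a b c ρ : ℝ) (q : Fin 6 → ℝ) : dyadZ a b c ρ q 4 = q 3 + a * q 4 := rfl
lemma dZ5 (a b c ρ : ℝ) (q : Fin 6 → ℝ) : dyadZ a b c ρ q 5 = b + q 5 * (q 3 - c) + ρ * (q 2 - q 5) := rfl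

lemma lie1y1 (a b c ρ : ℝ) :
    lieD (dyadZ a b c ρ) 1 (fun r => r 1) = fun q => q 0 + a * q 1 := by
  funext q
  show fderiv ℝ (fun r : Fin 6 → ℝ => r 1) q (dyadZ a b c ρ q) = _
  rw [(hasFDerivAt_apply (𝕜 := ℝ) 1 q).fderiv]
  simp only [ContinuousLinearMap.proj_apply, ContinuousLinearMap.add_apply, ContinuousLinearMap.sub_apply, ContinuousLinearMap.smul_apply, smul_eq_mul, dZ0, dZ1, dZ2, dZ3, dZ4, dZ5]

lemma lie1y4 (a b c ρ : ℝ) :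
    lieD (dyadZ a b c ρ) 1 (fun r => r 4) = fun q => q 3 + a * q 4 := by
  funext q
  show fderiv ℝ (fun r : Fin 6 → ℝ => r 4) q (dyadZ a b c ρ q) = _
  rw [(hasFDerivAt_apply (𝕜 := ℝ) 4 q).fderiv]
  simp only [ContinuousLinearMap.proj_apply, ContinuousLinearMap.add_apply, ContinuousLinearMap.sub_apply, ContinuousLinearMap.smul_apply, smul_eq_mul, dZ0, dZ1, dZ2, dZ3, dZ4, dZ5]

lemma lie2y4 (a b c ρ : ℝ) :
    lieD (dyadZ a b c ρ) 2 (fun r => r 4) =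
      fun q => a * q 3 + (a ^ 2 - 1) * q 4 - q 5 := by
  funext q
  show fderiv ℝ (lieD (dyadZ a b c ρ) 1 (fun r => r 4)) q (dyadZ a b c ρ q) = _
  rw [lie1y4]
  have h : HasFDerivAt (fun q : Fin 6 → ℝ => q 3 + a * q 4)
      (ContinuousLinearMap.proj (3 : Fin 6) + a • ContinuousLinearMap.proj (4 : Fin 6)) q :=
    (hasFDerivAt_apply (𝕜 := ℝ) 3 q).add ((hasFDerivAt_apply (𝕜 := ℝ) 4 q).const_mul a)
  rw [h.fderiv]
  simp only [ContinuousLinearMap.proj_apply, ContinuousLinearMap.add_apply, ContinuousLinearMap.sub_apply, ContinuousLinearMap.smul_apply, smul_eq_mul, dZ0, dZ1, dZ2, dZ3, dZ4, dZ5]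
  ring

lemma lie3y4 (a b c ρ : ℝ) :
    lieD (dyadZ a b c ρ) 3 (fun r => r 4) =
      fun q => (a ^ 2 - 1) * q 3 + (a ^ 3 - 2 * a) * q 4 + (c - a + ρ - q 3) * q 5
        - b - ρ * q 2 := by
  funext q
  show fderiv ℝ (lieD (dyadZ a b c ρ) 2 (fun r => r 4)) q (dyadZ a b c ρ q) = _
  rw [lie2y4]
  have h : HasFDerivAt (fun q : Fin 6 → ℝ => a * q 3 + (a ^ 2 - 1) * q 4 - q 5)
      (a • ContinuousLinearMap.proj (3 : Fin 6) + (a ^ 2 - 1) • ContinuousLinearMap.proj (4 : Fin 6)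
        - ContinuousLinearMap.proj (5 : Fin 6)) q :=
    (((hasFDerivAt_apply (𝕜 := ℝ) 3 q).const_mul a).add
      ((hasFDerivAt_apply (𝕜 := ℝ) 4 q).const_mul (a ^ 2 - 1))).sub
      (hasFDerivAt_apply (𝕜 := ℝ) 5 q)
  rw [h.fderiv]
  simp only [ContinuousLinearMap.proj_apply, ContinuousLinearMap.add_apply, ContinuousLinearMap.sub_apply, ContinuousLinearMap.smul_apply, smul_eq_mul, dZ0, dZ1, dZ2, dZ3, dZ4, dZ5]
  ring

lemma lie0 {E : Type*} [NormedAddCommGroup E] [NormedSpace ℝ E]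
    (F : E → E) (h : E → ℝ) : lieD F 0 h = h := rfl

lemma cons_val_five' {α : Type*} (x₀ x₁ x₂ x₃ x₄ x₅ : α) :
    ![x₀, x₁, x₂, x₃, x₄, x₅] (5 : Fin 6) = x₅ := rfl

lemma Phi_eq (a b c ρ : ℝ) :
    PhiY2Y4 (dyadZ a b c ρ) = fun q =>
      ![q 1, q 0 + a * q 1, q 4, q 3 + a * q 4,
        a * q 3 + (a ^ 2 - 1) * q 4 - q 5,
        (a ^ 2 - 1) * q 3 + (a ^ 3 - 2 * a) * q 4 + (c - a + ρ - q 3) * q 5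
          - b - ρ * q 2] := by
  funext q
  unfold PhiY2Y4
  rw [lie0, lie0, lie1y1, lie1y4, lie2y4, lie3y4]


set_option maxHeartbeats 1000000 in
set_option maxRecDepth 8000 in
/-- For the `z`-coupled dyad of Rössler systems, the observability determinant of
`Φ = (y₁, L_F y₁, y₂, L_F y₂, L_F² y₂, L_F³ y₂)` equals `-ρ` everywhere. -/
theorem dyadZ_obsDet_y2y4 (a b c ρ : ℝ) (p : Fin 6 → ℝ) :
    obsDet (PhiY2Y4 (dyadZ a b c ρ)) p = -ρ := by
  set M : Matrix (Fin 6) (Fin 6) ℝ :=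
    !![0, 1, 0, 0, 0, 0;
       1, a, 0, 0, 0, 0;
       0, 0, 0, 0, 1, 0;
       0, 0, 0, 1, a, 0;
       0, 0, 0, a, a ^ 2 - 1, -1;
       0, 0, -ρ, a ^ 2 - 1 - p 5, a ^ 3 - 2 * a, c - a + ρ - p 3] with hM
  set L : (Fin 6 → ℝ) →L[ℝ] (Fin 6 → ℝ) :=
    LinearMap.toContinuousLinearMap (Matrix.toLin' M) with hL
  have hLv : ∀ v, L v = M.mulVec v := by
    intro v; rw [hL]; simp [Matrix.toLin'_apply]
  have H : HasFDerivAt (PhiY2Y4 (dyadZ a b c ρ)) L p := by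
    rw [Phi_eq]
    apply hasFDerivAt_pi''
    intro i
    fin_cases i
    · have h : HasFDerivAt (fun q : Fin 6 → ℝ => q 1) (ContinuousLinearMap.proj (1 : Fin 6) : (Fin 6 → ℝ) →L[ℝ] ℝ) p :=
        hasFDerivAt_apply (𝕜 := ℝ) 1 p
      refine h.congr_fderiv ?_
      symm
      ext v
      rw [ContinuousLinearMap.comp_apply, hLv v]
      show M.mulVec v (0 : Fin 6) = _
      simp only [hM, Matrix.mulVec, dotProduct, Fin.sum_univ_six, Matrix.of_apply,
        Matrix.cons_val_zero, Matrix.cons_val_one, Matrix.head_cons, Matrix.tail_cons,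
        Matrix.cons_val_succ, Matrix.cons_val_two, Matrix.cons_val_three, Matrix.cons_val_four, cons_val_five',
        ContinuousLinearMap.proj_apply, ContinuousLinearMap.add_apply,
        ContinuousLinearMap.sub_apply, ContinuousLinearMap.smul_apply,
        ContinuousLinearMap.zero_apply, smul_eq_mul]
      ring
    · have h : HasFDerivAt (fun q : Fin 6 → ℝ => q 0 + a * q 1) (ContinuousLinearMap.proj (0 : Fin 6) + a • ContinuousLinearMap.proj (1 : Fin 6) : (Fin 6 → ℝ) →L[ℝ] ℝ) p :=
        (hasFDerivAt_apply (𝕜 := ℝ) 0 p).add ((hasFDerivAt_apply (𝕜 := ℝ) 1 p).const_mul a)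
      refine h.congr_fderiv ?_
      symm
      ext v
      rw [ContinuousLinearMap.comp_apply, hLv v]
      show M.mulVec v (1 : Fin 6) = _
      simp only [hM, Matrix.mulVec, dotProduct, Fin.sum_univ_six, Matrix.of_apply,
        Matrix.cons_val_zero, Matrix.cons_val_one, Matrix.head_cons, Matrix.tail_cons,
        Matrix.cons_val_succ, Matrix.cons_val_two, Matrix.cons_val_three, Matrix.cons_val_four, cons_val_five',
        ContinuousLinearMap.proj_apply, ContinuousLinearMap.add_apply,
        ContinuousLinearMap.sub_apply, ContinuousLinearMap.smul_apply,
        ContinuousLinearMap.zero_apply, smul_eq_mul]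
      ring
    · have h : HasFDerivAt (fun q : Fin 6 → ℝ => q 4) (ContinuousLinearMap.proj (4 : Fin 6) : (Fin 6 → ℝ) →L[ℝ] ℝ) p :=
        hasFDerivAt_apply (𝕜 := ℝ) 4 p
      refine h.congr_fderiv ?_
      symm
      ext v
      rw [ContinuousLinearMap.comp_apply, hLv v]
      show M.mulVec v (2 : Fin 6) = _
      simp only [hM, Matrix.mulVec, dotProduct, Fin.sum_univ_six, Matrix.of_apply,
        Matrix.cons_val_zero, Matrix.cons_val_one, Matrix.head_cons, Matrix.tail_cons,
        Matrix.cons_val_succ, Matrix.cons_val_two, Matrix.cons_val_three, Matrix.cons_val_four, cons_val_five',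
        ContinuousLinearMap.proj_apply, ContinuousLinearMap.add_apply,
        ContinuousLinearMap.sub_apply, ContinuousLinearMap.smul_apply,
        ContinuousLinearMap.zero_apply, smul_eq_mul]
      ring
    · have h : HasFDerivAt (fun q : Fin 6 → ℝ => q 3 + a * q 4) (ContinuousLinearMap.proj (3 : Fin 6) + a • ContinuousLinearMap.proj (4 : Fin 6) : (Fin 6 → ℝ) →L[ℝ] ℝ) p :=
        (hasFDerivAt_apply (𝕜 := ℝ) 3 p).add ((hasFDerivAt_apply (𝕜 := ℝ) 4 p).const_mul a)
      refine h.congr_fderiv ?_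
      symm
      ext v
      rw [ContinuousLinearMap.comp_apply, hLv v]
      show M.mulVec v (3 : Fin 6) = _
      simp only [hM, Matrix.mulVec, dotProduct, Fin.sum_univ_six, Matrix.of_apply,
        Matrix.cons_val_zero, Matrix.cons_val_one, Matrix.head_cons, Matrix.tail_cons,
        Matrix.cons_val_succ, Matrix.cons_val_two, Matrix.cons_val_three, Matrix.cons_val_four, cons_val_five',
        ContinuousLinearMap.proj_apply, ContinuousLinearMap.add_apply,
        ContinuousLinearMap.sub_apply, ContinuousLinearMap.smul_apply,
        ContinuousLinearMap.zero_apply, smul_eq_mul]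
      ring
    · have h : HasFDerivAt (fun q : Fin 6 → ℝ => a * q 3 + (a ^ 2 - 1) * q 4 - q 5) (a • ContinuousLinearMap.proj (3 : Fin 6) + (a ^ 2 - 1) • ContinuousLinearMap.proj (4 : Fin 6) - ContinuousLinearMap.proj (5 : Fin 6) : (Fin 6 → ℝ) →L[ℝ] ℝ) p :=
        (((hasFDerivAt_apply (𝕜 := ℝ) 3 p).const_mul a).add ((hasFDerivAt_apply (𝕜 := ℝ) 4 p).const_mul (a ^ 2 - 1))).sub (hasFDerivAt_apply (𝕜 := ℝ) 5 p)
      refine h.congr_fderiv ?_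
      symm
      ext v
      rw [ContinuousLinearMap.comp_apply, hLv v]
      show M.mulVec v (4 : Fin 6) = _
      simp only [hM, Matrix.mulVec, dotProduct, Fin.sum_univ_six, Matrix.of_apply,
        Matrix.cons_val_zero, Matrix.cons_val_one, Matrix.head_cons, Matrix.tail_cons,
        Matrix.cons_val_succ, Matrix.cons_val_two, Matrix.cons_val_three, Matrix.cons_val_four, cons_val_five',
        ContinuousLinearMap.proj_apply, ContinuousLinearMap.add_apply,
        ContinuousLinearMap.sub_apply, ContinuousLinearMap.smul_apply,
        ContinuousLinearMap.zero_apply, smul_eq_mul]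
      ring
    · have h1 : HasFDerivAt (fun q : Fin 6 → ℝ => c - a + ρ - q 3)
          ((0 : (Fin 6 → ℝ) →L[ℝ] ℝ) - ContinuousLinearMap.proj (3 : Fin 6)) p :=
        (hasFDerivAt_const (c - a + ρ) p).sub (hasFDerivAt_apply (𝕜 := ℝ) 3 p)
      have h2 : HasFDerivAt (fun q : Fin 6 → ℝ => (c - a + ρ - q 3) * q 5)
          ((c - a + ρ - p 3) • (ContinuousLinearMap.proj (5 : Fin 6) : (Fin 6 → ℝ) →L[ℝ] ℝ)
            + p 5 • ((0 : (Fin 6 → ℝ) →L[ℝ] ℝ) - ContinuousLinearMap.proj (3 : Fin 6))) p :=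
        h1.mul (hasFDerivAt_apply (𝕜 := ℝ) 5 p)
      have h : HasFDerivAt (fun q : Fin 6 → ℝ =>
          (a ^ 2 - 1) * q 3 + (a ^ 3 - 2 * a) * q 4 + (c - a + ρ - q 3) * q 5 - b - ρ * q 2)
          ((a ^ 2 - 1) • ContinuousLinearMap.proj (3 : Fin 6)
            + (a ^ 3 - 2 * a) • ContinuousLinearMap.proj (4 : Fin 6)
            + ((c - a + ρ - p 3) • (ContinuousLinearMap.proj (5 : Fin 6) : (Fin 6 → ℝ) →L[ℝ] ℝ)
              + p 5 • ((0 : (Fin 6 → ℝ) →L[ℝ] ℝ) - ContinuousLinearMap.proj (3 : Fin 6)))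
            - (0 : (Fin 6 → ℝ) →L[ℝ] ℝ)
            - ρ • ContinuousLinearMap.proj (2 : Fin 6)) p :=
        (((((hasFDerivAt_apply (𝕜 := ℝ) 3 p).const_mul (a ^ 2 - 1)).add
          ((hasFDerivAt_apply (𝕜 := ℝ) 4 p).const_mul (a ^ 3 - 2 * a))).add h2).sub
          (hasFDerivAt_const b p)).sub ((hasFDerivAt_apply (𝕜 := ℝ) 2 p).const_mul ρ)
      refine h.congr_fderiv ?_
      symm
      ext v
      rw [ContinuousLinearMap.comp_apply, hLv v]
      show M.mulVec v (5 : Fin 6) = _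
      simp only [hM, Matrix.mulVec, dotProduct, Fin.sum_univ_six, Matrix.of_apply,
        Matrix.cons_val_zero, Matrix.cons_val_one, Matrix.head_cons, Matrix.tail_cons,
        Matrix.cons_val_succ, Matrix.cons_val_two, Matrix.cons_val_three, Matrix.cons_val_four, cons_val_five',
        ContinuousLinearMap.proj_apply, ContinuousLinearMap.add_apply,
        ContinuousLinearMap.sub_apply, ContinuousLinearMap.smul_apply,
        ContinuousLinearMap.zero_apply, smul_eq_mul]
      ring
  rw [obsDet, H.fderiv]
  have hcoe : (L.toLinearMap : (Fin 6 → ℝ) →ₗ[ℝ] (Fin 6 → ℝ)) = Matrix.toLin' M := by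
    rw [hL]; ext v; simp
  rw [hcoe, LinearMap.det_toLin']
  rw [hM]
  simp [Matrix.det_succ_row_zero, Fin.sum_univ_succ, Fin.succAbove]
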